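/- Let L be a finite group, t = 2 and θ = id, and let ℓ ∈ L. Suppose there exist x, y, a ∈ L such that ℓ = xy = yx, x ≠ e ≠ y, x² = e, a centralizes both x and y, a⁴ ≠ e, and x ∉ ⟨a⟩. Then the twisted homogeneous rack C_ℓ of class (L, 2, id) is of type D. -/
import Mathlib


/-- A nonempty subset of `X` closed under the operation `op` (a subrack). -/
def IsSubrackOf {X : Type*} (op : X → X → X) (Y : Set X) : Prop :=
  Y.Nonempty ∧ ∀ a ∈ Y, ∀ b ∈ Y, op a b ∈ Y

/-- The rack with underlying set `C ⊆ X` and operation `op` is of type D: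
there is a decomposable subrack `R ⊔ S` of `C` and `r ∈ R`, `s ∈ S` with
`r ▹ (s ▹ (r ▹ s)) ≠ s`. -/
def IsTypeDOn {X : Type*} (op : X → X → X) (C : Set X) : Prop :=
  ∃ R S : Set X, R ⊆ C ∧ S ⊆ C ∧ IsSubrackOf op R ∧ IsSubrackOf op S ∧
    Disjoint R S ∧
    (∀ r ∈ R, ∀ s ∈ S, op r s ∈ S) ∧ (∀ s ∈ S, ∀ r ∈ R, op s r ∈ R) ∧
    ∃ r ∈ R, ∃ s ∈ S, op r (op s (op r s)) ≠ s

/-- The automorphism `u` of `L^t`: `u(ℓ₁, …, ℓ_t) = (θ(ℓ_t), ℓ₁, …, ℓ_{t-1})`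
(indices `0, …, t-1`, so coordinate `0` is `ℓ₁` and coordinate `t-1` is `ℓ_t`). -/
def thrU {L : Type*} [Group L] (θ : L ≃* L) (t : ℕ) (x : Fin t → L) : Fin t → L :=
  fun i => if (i : ℕ) = 0 then θ (x ⟨t - 1, by have := i.2; omega⟩)
    else x ⟨(i : ℕ) - 1, by have := i.2; omega⟩

/-- The rack operation `y ▹ z = y · u(z · y⁻¹)` on `L^t`. -/
def thrOp {L : Type*} [Group L] (θ : L ≃* L) (t : ℕ) (y z : Fin t → L) : Fin t → L :=
  y * thrU θ t (z * y⁻¹)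

/-- The element `(e, …, e, ℓ)` of `L^t`. -/
def thrBase {L : Type*} [Group L] (t : ℕ) (ℓ : L) : Fin t → L :=
  fun i => if (i : ℕ) = t - 1 then ℓ else 1

/-- The twisted conjugacy class (twisted homogeneous rack) of `x ∈ L^t`
with respect to `u`, i.e. the orbit of `x` under `g ⇀ x = g · x · u(g)⁻¹`. -/
def thrClassOf {L : Type*} [Group L] (θ : L ≃* L) (t : ℕ) (x : Fin t → L) :
    Set (Fin t → L) :=
  {y | ∃ g : Fin t → L, g * x * (thrU θ t g)⁻¹ = y}

/-- The twisted homogeneous rack `C_ℓ = C_{(e,…,e,ℓ)}` of class `(L, t, θ)`. -/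
def thrClass {L : Type*} [Group L] (θ : L ≃* L) (t : ℕ) (ℓ : L) : Set (Fin t → L) :=
  thrClassOf θ t (thrBase t ℓ)

/-- The twisted conjugacy class `O^{L,θ}_ℓ = {a·ℓ·θ(a)⁻¹ : a ∈ L}`. -/
def twConjClass {L : Type*} [Group L] (θ : L ≃* L) (ℓ : L) : Set L :=
  {k | ∃ a : L, a * ℓ * (θ a)⁻¹ = k}

def thrP {L : Type*} [Group L] (ℓ b : L) : Fin 2 → L :=
  fun i => if (i : ℕ) = 0 then b else b⁻¹ * ℓ

lemma thrP_inj {L : Type*} [Group L] {ℓ b c : L} (h : thrP ℓ b = thrP ℓ c) : b = c := by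
  have := congrFun h 0
  simpa [thrP] using this

lemma thrP_mem {L : Type*} [Group L] (ℓ b : L) :
    thrP ℓ b ∈ thrClass (MulEquiv.refl L) 2 ℓ := by
  refine ⟨fun i => if (i : ℕ) = 0 then 1 else b⁻¹, ?_⟩
  funext i
  fin_cases i <;>
    simp [thrP, thrU, thrBase, thrClass, thrClassOf, Pi.mul_apply, Pi.inv_apply]

lemma thrOp_thrP {L : Type*} [Group L] {ℓ b c : L} (h : Commute ℓ (c * b⁻¹)) :
    thrOp (MulEquiv.refl L) 2 (thrP ℓ b) (thrP ℓ c) = thrP ℓ (b * c⁻¹ * b) := by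
  funext i
  fin_cases i
  · show (thrP ℓ b * thrU (MulEquiv.refl L) 2 (thrP ℓ c * (thrP ℓ b)⁻¹)) 0 = _
    simp [thrP, thrU, Pi.mul_apply, Pi.inv_apply]
    group
  · show (thrP ℓ b * thrU (MulEquiv.refl L) 2 (thrP ℓ c * (thrP ℓ b)⁻¹)) 1 = _
    simp [thrP, thrU, Pi.mul_apply, Pi.inv_apply]
    rw [mul_assoc, h.eq, ← mul_assoc]

/-- Lemma 3.8: `t = 2`, `θ = id`. If `ℓ = xy = yx` with `x ≠ e ≠ y`, `x² = e`,
`a` centralizing `x` and `y`, `a⁴ ≠ e` and `x ∉ ⟨a⟩`, then `C_ℓ` is of type D. -/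
theorem thrClass_isTypeD_t2_id {L : Type*} [Group L] [Fintype L] (ℓ x y a : L)
    (hℓ : ℓ = x * y) (hcomm : x * y = y * x) (hx : x ≠ 1) (hy : y ≠ 1)
    (hx2 : x ^ 2 = 1) (hax : a * x = x * a) (hay : a * y = y * a)
    (ha4 : a ^ 4 ≠ 1) (hxa : x ∉ Subgroup.zpowers a) :
    IsTypeDOn (thrOp (MulEquiv.refl L) 2) (thrClass (MulEquiv.refl L) 2 ℓ) := by
  have hxx : x * x = 1 := by rw [← sq]; exact hx2
  have hx1 : x⁻¹ = x := inv_eq_of_mul_eq_one_right hxx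
  have hCax : Commute a x := hax
  have hCay : Commute a y := hay
  have hCxy : Commute x y := hcomm
  have hCℓx : Commute ℓ x := by rw [hℓ]; exact (Commute.refl x).mul_left hCxy.symm
  have hCℓa : Commute ℓ a := by rw [hℓ]; exact hCax.symm.mul_left hCay.symm
  -- commutation with elements of ⟨a⟩
  have hCℓz : ∀ b ∈ Subgroup.zpowers a, Commute ℓ b := by
    intro b hb
    obtain ⟨n, rfl⟩ := Subgroup.mem_zpowers_iff.mp hb
    exact hCℓa.zpow_right n
  have hCxz : ∀ b ∈ Subgroup.zpowers a, Commute x b := by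
    intro b hb
    obtain ⟨n, rfl⟩ := Subgroup.mem_zpowers_iff.mp hb
    exact (hCax.symm).zpow_right n
  refine ⟨{p | ∃ b ∈ Subgroup.zpowers a, p = thrP ℓ b},
          {p | ∃ b ∈ Subgroup.zpowers a, p = thrP ℓ (x * b)}, ?_, ?_, ?_, ?_, ?_, ?_, ?_, ?_⟩
  · rintro p ⟨b, hb, rfl⟩; exact thrP_mem ℓ b
  · rintro p ⟨b, hb, rfl⟩; exact thrP_mem ℓ (x * b)
  · -- R subrack
    refine ⟨⟨thrP ℓ 1, 1, one_mem _, rfl⟩, ?_⟩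
    rintro p ⟨b, hb, rfl⟩ q ⟨c, hc, rfl⟩
    rw [thrOp_thrP ((hCℓz c hc).mul_right (hCℓz b hb).inv_right)]
    exact ⟨b * c⁻¹ * b, mul_mem (mul_mem hb (inv_mem hc)) hb, rfl⟩
  · -- S subrack
    refine ⟨⟨thrP ℓ (x * 1), 1, one_mem _, rfl⟩, ?_⟩
    rintro p ⟨b, hb, rfl⟩ q ⟨c, hc, rfl⟩
    rw [thrOp_thrP (((hCℓx.mul_right (hCℓz c hc)).mul_right
      (hCℓx.mul_right (hCℓz b hb)).inv_right))]
    refine ⟨b * c⁻¹ * b, mul_mem (mul_mem hb (inv_mem hc)) hb, ?_⟩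
    refine congrArg (thrP ℓ) ?_
    calc (x * b) * (x * c)⁻¹ * (x * b) = x * (b * c⁻¹ * (x⁻¹ * x) * b) := by group
      _ = x * (b * c⁻¹ * b) := by rw [inv_mul_cancel, mul_one]
  · -- disjoint
    rw [Set.disjoint_left]
    rintro p ⟨b, hb, rfl⟩ ⟨c, hc, hpc⟩
    have hbc : b = x * c := thrP_inj hpc
    exact hxa (by rw [show x = b * c⁻¹ by rw [hbc]; group]; exact mul_mem hb (inv_mem hc))
  · -- R ▹ S ⊆ S
    rintro p ⟨b, hb, rfl⟩ q ⟨c, hc, rfl⟩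
    rw [thrOp_thrP ((hCℓx.mul_right (hCℓz c hc)).mul_right (hCℓz b hb).inv_right)]
    refine ⟨b * c⁻¹ * b, mul_mem (mul_mem hb (inv_mem hc)) hb, ?_⟩
    refine congrArg (thrP ℓ) ?_
    have h1 : Commute x (b * c⁻¹) := (hCxz b hb).mul_right (hCxz c hc).inv_right
    calc b * (x * c)⁻¹ * b = (b * c⁻¹) * x⁻¹ * b := by group
      _ = (b * c⁻¹) * x * b := by rw [hx1]
      _ = x * (b * c⁻¹) * b := by rw [← h1.eq]
      _ = x * (b * c⁻¹ * b) := by rw [mul_assoc]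
  · -- S ▹ R ⊆ R
    rintro p ⟨b, hb, rfl⟩ q ⟨c, hc, rfl⟩
    rw [thrOp_thrP ((hCℓz c hc).mul_right (hCℓx.mul_right (hCℓz b hb)).inv_right)]
    refine ⟨b * c⁻¹ * b, mul_mem (mul_mem hb (inv_mem hc)) hb, ?_⟩
    refine congrArg (thrP ℓ) ?_
    have h1 : Commute x (b * c⁻¹) := (hCxz b hb).mul_right (hCxz c hc).inv_right
    calc (x * b) * c⁻¹ * (x * b) = x * ((b * c⁻¹) * x) * b := by group
      _ = x * (x * (b * c⁻¹)) * b := by rw [← h1.eq]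
      _ = (x * x) * (b * c⁻¹ * b) := by group
      _ = b * c⁻¹ * b := by rw [hxx, one_mul]
  · -- type D inequality
    refine ⟨thrP ℓ a, ⟨a, Subgroup.mem_zpowers a, rfl⟩,
            thrP ℓ (x * 1), ⟨1, one_mem _, rfl⟩, ?_⟩
    have hC1 : Commute ℓ ((x * 1) * a⁻¹) :=
      (hCℓx.mul_right (Commute.one_right ℓ)).mul_right hCℓa.inv_right
    rw [thrOp_thrP hC1]
    have e1 : a * (x * 1)⁻¹ * a = x * (a * a) := by
      calc a * (x * 1)⁻¹ * a = a * x⁻¹ * a := by rw [mul_one]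
        _ = a * x * a := by rw [hx1]
        _ = x * (a * a) := by rw [hax, mul_assoc]
    rw [e1]
    have hC2 : Commute ℓ ((x * (a * a)) * (x * 1)⁻¹) :=
      (hCℓx.mul_right (hCℓa.mul_right hCℓa)).mul_right
        (hCℓx.mul_right (Commute.one_right ℓ)).inv_right
    rw [thrOp_thrP hC2]
    have e2 : (x * 1) * (x * (a * a))⁻¹ * (x * 1) = x * (a * a)⁻¹ := by
      group
    rw [e2]
    have hC3 : Commute ℓ ((x * (a * a)⁻¹) * a⁻¹) :=
      (hCℓx.mul_right (hCℓa.mul_right hCℓa).inv_right).mul_right hCℓa.inv_right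
    rw [thrOp_thrP hC3]
    have hc3 : (a * (a * a)) * x = x * (a * (a * a)) :=
      (hCax.mul_left (hCax.mul_left hCax)).eq
    have e3 : a * (x * (a * a)⁻¹)⁻¹ * a = x * (a * (a * a) * a) := by
      calc a * (x * (a * a)⁻¹)⁻¹ * a = (a * (a * a)) * x * a := by
            rw [mul_inv_rev, inv_inv, hx1]; simp [mul_assoc]
        _ = x * (a * (a * a)) * a := by rw [hc3]
        _ = x * (a * (a * a) * a) := by rw [mul_assoc]
    rw [e3]
    intro hcontra
    have h5 : a * (a * a) * a = 1 := by
      simpa using mul_left_cancel (thrP_inj hcontra)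
    refine ha4 ?_
    calc a ^ 4 = ((a * a) * a) * a := by rw [pow_succ, pow_succ, pow_two]
      _ = a * (a * a) * a := by simp [mul_assoc]
      _ = 1 := h5
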